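/- arXiv:1912.02097 — 4 statements merged into one kernel-verified Lean document; each statement's English description precedes it below -/
import Mathlib

section
/- The degraded secrecy rate under jamming, R_DJ(P_J) = log₂((1+γ_SU)(1+γ_AU(P_J))/(1+γ_SU+γ_AU(P_J))) with γ_AU(P_J) = P_J·g_AU/σ², where g_SU, g_AU, P_S, σ² > 0 and γ_SU = P_S·g_SU/σ², is a strictly concave function of P_J on [0, ∞). -/
open Real Set Filter

theorem stmt6 (gSU gAU PS σ2 : ℝ) (hgSU : 0 < gSU) (hgAU : 0 < gAU) (hPS : 0 < PS)
    (hσ2 : 0 < σ2) (γSU : ℝ) (hγSU : γSU = PS * gSU / σ2)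
    (RDJ : ℝ → ℝ)
    (hRDJ : ∀ PJ, RDJ PJ =
      Real.logb 2 ((1 + γSU) * (1 + PJ * gAU / σ2) / (1 + γSU + PJ * gAU / σ2))) :
    StrictConcaveOn ℝ (Set.Ici 0) RDJ := by
  have ha : 0 < gAU / σ2 := div_pos hgAU hσ2
  set a := gAU / σ2 with ha_def
  have hc : 0 < γSU := by rw [hγSU]; positivity
  set c := γSU with hc_def
  set g : ℝ → ℝ := fun P => Real.log (1 + a * P) - Real.log (1 + c + a * P) with hg_def
  -- strict concavity of the core function
  have key : StrictConcaveOn ℝ (Set.Ici 0) g := by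
    have hder : ∀ y ∈ Ioi (0:ℝ), HasDerivAt g
        (a / (1 + a * y) - a / (1 + c + a * y)) y := by
      intro y hy
      have h1 : (0:ℝ) < 1 + a * y := by nlinarith [mem_Ioi.mp hy]
      have h2 : (0:ℝ) < 1 + c + a * y := by nlinarith [mem_Ioi.mp hy]
      have d1 : HasDerivAt (fun P : ℝ => 1 + a * P) a y := by
        simpa using ((hasDerivAt_id y).const_mul a).const_add 1
      have d2 : HasDerivAt (fun P : ℝ => 1 + c + a * P) a y := by
        simpa using ((hasDerivAt_id y).const_mul a).const_add (1 + c)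
      exact (d1.log h1.ne').sub (d2.log h2.ne')
    apply strictConcaveOn_of_deriv2_neg (convex_Ici 0)
    · -- continuity
      apply ContinuousOn.sub
      · apply Real.continuousOn_log.comp (by fun_prop)
        intro x hx
        have : (0:ℝ) < 1 + a * x := by nlinarith [mem_Ici.mp hx]
        simpa using this.ne'
      · apply Real.continuousOn_log.comp (by fun_prop)
        intro x hx
        have : (0:ℝ) < 1 + c + a * x := by nlinarith [mem_Ici.mp hx]
        simpa using this.ne'
    · intro x hx
      rw [interior_Ici] at hx
      have hx0 : (0:ℝ) < x := hx
      have h1 : (0:ℝ) < 1 + a * x := by nlinarith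
      have h2 : (0:ℝ) < 1 + c + a * x := by nlinarith
      have heq : deriv g =ᶠ[nhds x] fun y => a / (1 + a * y) - a / (1 + c + a * y) :=
        Filter.eventuallyEq_of_mem (Ioi_mem_nhds hx0) (fun y hy => (hder y hy).deriv)
      have h2d : deriv (deriv g) x
          = deriv (fun y => a / (1 + a * y) - a / (1 + c + a * y)) x := heq.deriv_eq
      have d1 : HasDerivAt (fun P : ℝ => 1 + a * P) a x := by
        simpa using ((hasDerivAt_id x).const_mul a).const_add 1
      have d2 : HasDerivAt (fun P : ℝ => 1 + c + a * P) a x := by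
        simpa using ((hasDerivAt_id x).const_mul a).const_add (1 + c)
      have e1 : HasDerivAt (fun y : ℝ => a * (1 + a * y)⁻¹)
          (a * (-a / (1 + a * x) ^ 2)) x := (d1.inv h1.ne').const_mul a
      have e2 : HasDerivAt (fun y : ℝ => a * (1 + c + a * y)⁻¹)
          (a * (-a / (1 + c + a * x) ^ 2)) x := (d2.inv h2.ne').const_mul a
      have e : HasDerivAt (fun y : ℝ => a / (1 + a * y) - a / (1 + c + a * y))
          (a * (-a / (1 + a * x) ^ 2) - a * (-a / (1 + c + a * x) ^ 2)) x := by
        simpa only [div_eq_mul_inv, Pi.sub_def] using e1.sub e2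
      rw [Function.iterate_succ, Function.iterate_one, Function.comp_apply, h2d, e.deriv]
      have hlt : (1 + a * x) ^ 2 < (1 + c + a * x) ^ 2 := by nlinarith
      have hmain : a * a / (1 + c + a * x) ^ 2 < a * a / (1 + a * x) ^ 2 :=
        div_lt_div_of_pos_left (by positivity) (by positivity) hlt
      have hrw : a * (-a / (1 + a * x) ^ 2) - a * (-a / (1 + c + a * x) ^ 2)
          = a * a / (1 + c + a * x) ^ 2 - a * a / (1 + a * x) ^ 2 := by ring
      rw [hrw]
      linarith
  -- pointwise description of RDJ on Ici 0
  have hlog2 : (0:ℝ) < Real.log 2 := Real.log_pos (by norm_num)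
  have hpt : ∀ P ∈ Set.Ici (0:ℝ),
      RDJ P = (Real.log (1 + c) + g P) / Real.log 2 := by
    intro P hP
    have hP0 : (0:ℝ) ≤ P := hP
    have h1 : (0:ℝ) < 1 + a * P := by nlinarith
    have h2 : (0:ℝ) < 1 + c + a * P := by nlinarith
    have h3 : (0:ℝ) < 1 + c := by linarith
    have haP : P * gAU / σ2 = a * P := by rw [ha_def]; ring
    rw [hRDJ, haP, Real.logb, Real.log_div (by positivity) h2.ne',
      Real.log_mul h3.ne' h1.ne', hg_def]
    ring
  -- transfer
  refine ⟨convex_Ici 0, fun x hx y hy hxy s t hs ht hst => ?_⟩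
  have hmem : s • x + t • y ∈ Set.Ici (0:ℝ) := (convex_Ici 0) hx hy hs.le ht.le hst
  rw [hpt x hx, hpt y hy, hpt _ hmem]
  have hk := key.2 hx hy hxy hs ht hst
  simp only [smul_eq_mul] at hk ⊢
  have hrw : s * ((Real.log (1 + c) + g x) / Real.log 2)
      + t * ((Real.log (1 + c) + g y) / Real.log 2)
      = (s * (Real.log (1 + c) + g x) + t * (Real.log (1 + c) + g y)) / Real.log 2 := by
    ring
  rw [hrw, div_lt_div_iff_of_pos_right hlog2]
  have hL : s * Real.log (1 + c) + t * Real.log (1 + c) = Real.log (1 + c) := by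
    rw [← add_mul, hst, one_mul]
  nlinarith [hk, hL]
end

section
/- The jamming attacker energy efficiency η_J(P_J) = R_DJ(P_J)/(P_ft + P_J/ν), where R_DJ(P_J) = log₂((1+γ_SU)(1+g_AU·P_J/σ²)/(1+γ_SU+g_AU·P_J/σ²)), P_ft > 0, ν > 0, is pseudo-concave in P_J on [0, ∞); consequently any critical point of η_J is a global maximizer over any interval [0, Pᵘ]. -/
theorem stmt10 (gSU gAU PS σ2 Pft ν : ℝ) (hgSU : 0 < gSU) (hgAU : 0 < gAU)
    (hPS : 0 < PS) (hσ2 : 0 < σ2) (hPft : 0 < Pft) (hν : 0 < ν)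
    (γSU : ℝ) (hγSU : γSU = PS * gSU / σ2)
    (RDJ ηJ : ℝ → ℝ)
    (hRDJ : ∀ PJ, RDJ PJ =
      Real.logb 2 ((1 + γSU) * (1 + gAU * PJ / σ2) / (1 + γSU + gAU * PJ / σ2)))
    (hηJ : ∀ PJ, ηJ PJ = RDJ PJ / (Pft + PJ / ν)) :
    (∀ x ∈ Set.Ici (0:ℝ), ∀ y ∈ Set.Ici (0:ℝ),
      deriv ηJ x * (y - x) ≤ 0 → ηJ y ≤ ηJ x) ∧
    (∀ Pu : ℝ, 0 ≤ Pu → ∀ x ∈ Set.Icc (0:ℝ) Pu, deriv ηJ x = 0 →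
      ∀ y ∈ Set.Icc (0:ℝ) Pu, ηJ y ≤ ηJ x) := by
  have hc : (0:ℝ) < Real.log 2 := Real.log_pos one_lt_two
  set t : ℝ := gAU / σ2 with ht_def
  have ht : 0 < t := div_pos hgAU hσ2
  have hγ : 0 < γSU := by rw [hγSU]; positivity
  set δ : ℝ := min (1 / t) (ν * Pft) with hδ_def
  have hδ : 0 < δ := lt_min (by positivity) (by positivity)
  set g : ℝ → ℝ := fun P => Pft + P / ν with hg_def
  set F : ℝ → ℝ := fun P =>
    (Real.log (1 + γSU) + Real.log (1 + t * P) - Real.log (1 + γSU + t * P)) /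
      Real.log 2 with hF_def
  set F' : ℝ → ℝ := fun x =>
    (t / (1 + t * x) - t / (1 + γSU + t * x)) / Real.log 2 with hF'_def
  -- positivity facts on the open set {P | -δ < P}
  have hBpos : ∀ P : ℝ, -δ < P → 0 < 1 + t * P := by
    intro P hP
    have h1 : δ ≤ 1 / t := min_le_left _ _
    have h2 : t * δ ≤ 1 := by
      have := mul_le_mul_of_nonneg_left h1 ht.le
      rwa [mul_one_div_cancel ht.ne'] at this
    nlinarith [mul_lt_mul_of_pos_left hP ht]
  have hCpos : ∀ P : ℝ, -δ < P → 0 < 1 + γSU + t * P := by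
    intro P hP
    have := hBpos P hP
    linarith
  have hgpos : ∀ P : ℝ, -δ < P → 0 < g P := by
    intro P hP
    have h1 : δ ≤ ν * Pft := min_le_right _ _
    have h2 : -(ν * Pft) < P := by linarith
    show 0 < Pft + P / ν
    have h4 : P / ν * ν = P := div_mul_cancel₀ P hν.ne'
    nlinarith [h4, h2, hν]
  -- RDJ coincides with F there
  have hRDJ' : ∀ P : ℝ, -δ < P → RDJ P = F P := by
    intro P hP
    have hBP := hBpos P hP
    have hCP := hCpos P hP
    have htP : gAU * P / σ2 = t * P := by rw [ht_def]; ring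
    rw [hRDJ P, htP]
    simp only [Real.logb, hF_def]
    rw [Real.log_div (mul_pos (by positivity) hBP).ne' hCP.ne']
    rw [Real.log_mul (by positivity : (0:ℝ) < 1 + γSU).ne' hBP.ne']

  have hη_eq : ∀ P : ℝ, -δ < P → ηJ P = F P / g P := by
    intro P hP
    rw [hηJ P, hRDJ' P hP]
  -- derivative of ηJ on the open set
  have hFd : ∀ x : ℝ, -δ < x → HasDerivAt F (F' x) x := by
    intro x hx
    have hBx := hBpos x hx
    have hCx := hCpos x hx
    have hB' : HasDerivAt (fun P : ℝ => 1 + t * P) t x := by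
      simpa using ((hasDerivAt_id x).const_mul t).const_add 1
    have hC' : HasDerivAt (fun P : ℝ => 1 + γSU + t * P) t x := by
      simpa using ((hasDerivAt_id x).const_mul t).const_add (1 + γSU)
    have hlogB := hB'.log hBx.ne'
    have hlogC := hC'.log hCx.ne'
    have := (((hasDerivAt_const x (Real.log (1 + γSU))).add hlogB).sub
      hlogC).div_const (Real.log 2)
    rw [hF_def, hF'_def]
    simpa using this
  have hgd : ∀ x : ℝ, HasDerivAt g (1 / ν) x := by
    intro x
    exact ((hasDerivAt_id' x).div_const ν).const_add Pft
  have hderiv : ∀ x : ℝ, -δ < x →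
      deriv ηJ x = (F' x * g x - F x * (1 / ν)) / (g x) ^ 2 := by
    intro x hx
    have hev : ηJ =ᶠ[nhds x] fun P => F P / g P := by
      filter_upwards [Ioi_mem_nhds hx] with P hP using hη_eq P hP
    rw [hev.deriv_eq]
    exact ((hFd x hx).div (hgd x) (hgpos x hx).ne').deriv
  -- gradient (tangent-line) inequality for the concave F
  have hgrad : ∀ x : ℝ, 0 ≤ x → ∀ y : ℝ, 0 ≤ y →
      F y - F x ≤ F' x * (y - x) := by
    intro x hx y hy
    have hBx : (0:ℝ) < 1 + t * x := by nlinarith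
    have hCx : (0:ℝ) < 1 + γSU + t * x := by nlinarith
    have hBy : (0:ℝ) < 1 + t * y := by nlinarith
    have hCy : (0:ℝ) < 1 + γSU + t * y := by nlinarith
    set w : ℝ := (1 + t * y) * (1 + γSU + t * x) /
      ((1 + t * x) * (1 + γSU + t * y)) with hw_def
    have hw : 0 < w := by positivity
    have hlog := Real.log_le_sub_one_of_pos hw
    have hlogw : Real.log w =
        Real.log (1 + t * y) + Real.log (1 + γSU + t * x) -
          Real.log (1 + t * x) - Real.log (1 + γSU + t * y) := by
      rw [hw_def, Real.log_div (by positivity) (by positivity),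
        Real.log_mul hBy.ne' hCx.ne', Real.log_mul hBx.ne' hCy.ne']
      ring
    have hF : F y - F x = Real.log w / Real.log 2 := by
      rw [hF_def, hlogw]; ring
    rw [hF, div_le_iff₀ hc]
    refine hlog.trans ?_
    have hkey : F' x * (y - x) * Real.log 2 - (w - 1) =
        γSU * t ^ 2 * (y - x) ^ 2 /
          ((1 + t * x) * (1 + γSU + t * x) * (1 + γSU + t * y)) := by
      rw [hF'_def, hw_def]
      field_simp
      ring
    have hpos : 0 ≤ γSU * t ^ 2 * (y - x) ^ 2 /
        ((1 + t * x) * (1 + γSU + t * x) * (1 + γSU + t * y)) := by positivity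
    linarith
  clear_value t δ g F F'
  -- key pseudo-concavity step
  have key : ∀ x : ℝ, 0 ≤ x → ∀ y : ℝ, 0 ≤ y →
      deriv ηJ x * (y - x) ≤ 0 → ηJ y ≤ ηJ x := by
    intro x hx y hy hd
    have hx' : -δ < x := by linarith
    have hy' : -δ < y := by linarith
    have hgx := hgpos x hx'
    have hgy := hgpos y hy'
    rw [hη_eq x hx', hη_eq y hy', div_le_div_iff₀ hgy hgx]
    have h1 : (F' x * g x - F x * (1 / ν)) * (y - x) ≤ 0 := by
      have h2 : (F' x * g x - F x * (1 / ν)) * (y - x) =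
          deriv ηJ x * (y - x) * (g x) ^ 2 := by
        rw [hderiv x hx']
        field_simp
      rw [h2]
      exact mul_nonpos_of_nonpos_of_nonneg hd (sq_nonneg _)
    have h3 := mul_le_mul_of_nonneg_right (hgrad x hx y hy) hgx.le
    have h4 : g y - g x = (y - x) / ν := by simp only [hg_def]; ring
    have e : F y * g x - F x * g y = (F y - F x) * g x - F x * (g y - g x) := by
      ring
    have h7 : F y * g x - F x * g y ≤ 0 := by
      rw [e, h4]
      have h8 : F x * ((y - x) / ν) = F x * (1 / ν) * (y - x) := by ring
      rw [h8]
      linarith [h1, h3]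
    linarith [h7]
  constructor
  · intro x hx y hy hd
    exact key x hx y hy hd
  · intro Pu _ x hx hdx y hy
    apply key x hx.1 y hy.1
    rw [hdx, zero_mul]
end

section
/- For A, B > 0, the equation (A·B·P/((A + B·P)·σ²)) · exp(B·P/(A + B·P)) = e, in the unknown P > 0, has the unique solution P* = A·W(e·σ²/A)/(B·(1 − W(e·σ²/A))), where W is the principal Lambert W function, provided 0 < W(e·σ²/A) < 1. -/
lemma aux_inj (x y : ℝ) (hx : 0 < x) (hy : 0 < y)
    (h : x * Real.exp x = y * Real.exp y) : x = y := by
  rcases lt_trichotomy x y with hlt | heq | hgt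
  · have := mul_lt_mul'' hlt (Real.exp_lt_exp.mpr hlt) hx.le (Real.exp_pos x).le
    linarith
  · exact heq
  · have := mul_lt_mul'' hgt (Real.exp_lt_exp.mpr hgt) hy.le (Real.exp_pos y).le
    linarith

theorem stmt11 (A B σ2 : ℝ) (hA : 0 < A) (hB : 0 < B) (hσ2 : 0 < σ2)
    (W : ℝ → ℝ) (hW : W (Real.exp 1 * σ2 / A) * Real.exp (W (Real.exp 1 * σ2 / A)) =
      Real.exp 1 * σ2 / A)
    (hW01 : 0 < W (Real.exp 1 * σ2 / A) ∧ W (Real.exp 1 * σ2 / A) < 1)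
    (Pstar : ℝ)
    (hPstar : Pstar = A * W (Real.exp 1 * σ2 / A) / (B * (1 - W (Real.exp 1 * σ2 / A)))) :
    (0 < Pstar ∧
      (A * B * Pstar / ((A + B * Pstar) * σ2)) * Real.exp (B * Pstar / (A + B * Pstar)) =
        Real.exp 1) ∧
    ∀ P : ℝ, 0 < P →
      (A * B * P / ((A + B * P) * σ2)) * Real.exp (B * P / (A + B * P)) = Real.exp 1 →
      P = Pstar := by
  obtain ⟨hw0, hw1⟩ := hW01
  set w := W (Real.exp 1 * σ2 / A) with hwdef
  have h1w : 0 < 1 - w := by linarith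
  have hPpos : 0 < Pstar := by rw [hPstar]; positivity
  have hsumpos : 0 < A + B * Pstar := by positivity
  have hfactor : ∀ P : ℝ, 0 < P →
      A * B * P / ((A + B * P) * σ2) * Real.exp (B * P / (A + B * P)) =
        (A / σ2) * ((B * P / (A + B * P)) * Real.exp (B * P / (A + B * P))) := by
    intro P hP
    have hs : (A + B * P) ≠ 0 := by positivity
    field_simp
  have hfrac : B * Pstar / (A + B * Pstar) = w := by
    rw [hPstar] at hsumpos ⊢
    field_simp
    ring
  have hval : A * B * Pstar / ((A + B * Pstar) * σ2) *
      Real.exp (B * Pstar / (A + B * Pstar)) = Real.exp 1 := by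
    rw [hfactor Pstar hPpos, hfrac, hW]
    field_simp
  refine ⟨⟨hPpos, hval⟩, ?_⟩
  intro P hP hEq
  have hsP : 0 < A + B * P := by positivity
  have ht0 : 0 < B * P / (A + B * P) := by positivity
  rw [hfactor P hP] at hEq
  have hEq2 : (B * P / (A + B * P)) * Real.exp (B * P / (A + B * P)) = w * Real.exp w := by
    rw [hW]
    have hAne : (A : ℝ) ≠ 0 := ne_of_gt hA
    have hσne : (σ2 : ℝ) ≠ 0 := ne_of_gt hσ2
    field_simp at hEq ⊢
    linarith [hEq]
  have ht : B * P / (A + B * P) = w := aux_inj _ _ ht0 hw0 hEq2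
  have hBP : B * P = w * (A + B * P) := by
    field_simp at ht
    linarith [ht]
  rw [hPstar]
  rw [eq_div_iff (by positivity)]
  nlinarith [hBP]
end

section
/- Fix A = P_S·g_SU > 0, B = g_AU > 0, σ² > 0 with A/σ² > e (high SNR). Then P̂* = A·W(e·σ²/A)/(B·(1 − W(e·σ²/A))) is the unique maximizer on (0, ∞) of η̂(P) = log₂(A·B·P/((A + B·P)·σ²))/P. -/
theorem stmt19 (A B σ2 : ℝ) (hA : 0 < A) (hB : 0 < B) (hσ2 : 0 < σ2)
    (hSNR : Real.exp 1 < A / σ2)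
    (W : ℝ → ℝ)
    (hW : ∀ y : ℝ, -Real.exp (-1) ≤ y → W y * Real.exp (W y) = y ∧ -1 ≤ W y)
    (ηhat : ℝ → ℝ)
    (hηhat : ∀ P, ηhat P = Real.logb 2 (A * B * P / ((A + B * P) * σ2)) / P)
    (Phat : ℝ)
    (hPhat : Phat = A * W (Real.exp 1 * σ2 / A) / (B * (1 - W (Real.exp 1 * σ2 / A)))) :
    0 < Phat ∧
    (∀ P : ℝ, 0 < P → ηhat P ≤ ηhat Phat) ∧
    (∀ P : ℝ, 0 < P → ηhat P = ηhat Phat → P = Phat) := by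
  have hlog2 : (0:ℝ) < Real.log 2 := Real.log_pos (by norm_num)
  set y := Real.exp 1 * σ2 / A with hy_def
  have hy : 0 < y := by positivity
  obtain ⟨hwy, hwge⟩ := hW y (by linarith [Real.exp_pos (-1)])
  set w := W y with hw_def
  have hexpw := Real.exp_pos w
  have hw0 : 0 < w := by
    by_contra hcon
    push_neg at hcon
    nlinarith
  have hE1 : Real.exp 1 * σ2 < A := (lt_div_iff₀ hσ2).mp hSNR
  have hy1 : y < 1 := by
    rw [hy_def, div_lt_one hA]; exact hE1
  have hw1 : w < 1 := by
    by_contra hcon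
    push_neg at hcon
    have h2 : Real.exp 1 ≤ Real.exp w := Real.exp_le_exp.mpr hcon
    nlinarith [Real.exp_pos 1, Real.add_one_le_exp 1]
  have h1w : 0 < 1 - w := by linarith
  have hPpos : 0 < Phat := by
    rw [hPhat]
    exact div_pos (by positivity) (mul_pos hB h1w)
  have hBP : B * Phat = A * w / (1 - w) := by
    rw [hPhat]; field_simp
  have hsum : A + B * Phat = A / (1 - w) := by
    rw [hBP]; field_simp; ring
  set c := (1 - w) / Phat with hc_def
  have hc0 : 0 < c := div_pos h1w hPpos
  have hcPhat : c * Phat = 1 - w := by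
    rw [hc_def]; field_simp
  have hψ : c * (Phat * (A + B * Phat)) = A := by
    rw [hsum, hc_def]; field_simp
  set h := fun P : ℝ => c * P + Real.log (A + B * P) - Real.log P with hh_def
  have hderiv : ∀ x : ℝ, 0 < x → HasDerivAt h (c + B / (A + B * x) - 1 / x) x := by
    intro x hx
    have hAx : 0 < A + B * x := by positivity
    have d1 : HasDerivAt (fun P : ℝ => c * P) c x := by
      simpa using (hasDerivAt_id x).const_mul c
    have d2 : HasDerivAt (fun P : ℝ => A + B * P) B x := by
      simpa using ((hasDerivAt_id x).const_mul B).const_add A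
    have d3 : HasDerivAt (fun P : ℝ => Real.log (A + B * P)) (B / (A + B * x)) x :=
      d2.log (ne_of_gt hAx)
    have d4 : HasDerivAt Real.log (1 / x) x := by
      simpa using Real.hasDerivAt_log (ne_of_gt hx)
    exact (d1.add d3).sub d4
  have hderiv_neg : ∀ x : ℝ, 0 < x → x < Phat → c + B / (A + B * x) - 1 / x < 0 := by
    intro x hx hxP
    have hAx : 0 < A + B * x := by positivity
    have heq : c + B / (A + B * x) - 1 / x
        = (c * (x * (A + B * x)) + B * x - (A + B * x)) / (x * (A + B * x)) := by
      field_simp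
    rw [heq]
    apply div_neg_of_neg_of_pos _ (by positivity)
    nlinarith [mul_pos (mul_pos hc0 hB) (mul_pos (sub_pos.mpr hxP) (add_pos hx hPpos)),
      mul_pos (mul_pos hc0 hA) (sub_pos.mpr hxP)]
  have hderiv_pos : ∀ x : ℝ, Phat < x → 0 < c + B / (A + B * x) - 1 / x := by
    intro x hxP
    have hx : 0 < x := hPpos.trans hxP
    have hAx : 0 < A + B * x := by positivity
    have heq : c + B / (A + B * x) - 1 / x
        = (c * (x * (A + B * x)) + B * x - (A + B * x)) / (x * (A + B * x)) := by
      field_simp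
    rw [heq]
    apply div_pos _ (by positivity)
    nlinarith [mul_pos (mul_pos hc0 hB) (mul_pos (sub_pos.mpr hxP) (add_pos hx hPpos)),
      mul_pos (mul_pos hc0 hA) (sub_pos.mpr hxP)]
  have hanti : StrictAntiOn h (Set.Ioc 0 Phat) := by
    apply strictAntiOn_of_deriv_neg (convex_Ioc 0 Phat)
    · intro x hx
      exact (hderiv x hx.1).continuousAt.continuousWithinAt
    · intro x hx
      rw [interior_Ioc] at hx
      rw [(hderiv x hx.1).deriv]
      exact hderiv_neg x hx.1 hx.2
  have hmono : StrictMonoOn h (Set.Ici Phat) := by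
    apply strictMonoOn_of_deriv_pos (convex_Ici Phat)
    · intro x hx
      exact (hderiv x (lt_of_lt_of_le hPpos hx)).continuousAt.continuousWithinAt
    · intro x hx
      rw [interior_Ici] at hx
      rw [(hderiv x (hPpos.trans hx)).deriv]
      exact hderiv_pos x hx
  have hkey : ∀ P : ℝ, 0 < P → P ≠ Phat → h Phat < h P := by
    intro P hP hne
    rcases lt_or_gt_of_ne hne with hlt | hgt
    · exact hanti ⟨hP, hlt.le⟩ ⟨hPpos, le_refl _⟩ hlt
    · exact hmono (Set.self_mem_Ici) hgt.le hgt
  -- log decomposition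
  set K := Real.log A + Real.log B - Real.log σ2 with hK_def
  have hLh : ∀ P : ℝ, 0 < P →
      Real.log (A * B * P / ((A + B * P) * σ2)) = K - h P + c * P := by
    intro P hP
    have hAx : 0 < A + B * P := by positivity
    rw [hh_def, hK_def]
    simp only
    rw [Real.log_div (by positivity) (by positivity),
      Real.log_mul (by positivity) (ne_of_gt hP),
      Real.log_mul (ne_of_gt hA) (ne_of_gt hB),
      Real.log_mul (ne_of_gt hAx) (ne_of_gt hσ2)]
    ring
  have hAwe : A * (w * Real.exp w) = Real.exp 1 * σ2 := by
    rw [hwy, hy_def]; field_simp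
  have hφPhat : A * B * Phat / ((A + B * Phat) * σ2) = A * w / σ2 := by
    rw [show A * B * Phat = A * (B * Phat) by ring, hsum, hBP]
    field_simp
  have hAw : A * w / σ2 = Real.exp (1 - w) := by
    rw [Real.exp_sub]
    rw [div_eq_div_iff (ne_of_gt hσ2) (ne_of_gt (Real.exp_pos w))]
    linear_combination hAwe
  have hlogPhat : Real.log (A * B * Phat / ((A + B * Phat) * σ2)) = 1 - w := by
    rw [hφPhat, hAw, Real.log_exp]
  have hhPhat : h Phat = K := by
    have := hLh Phat hPpos
    rw [hlogPhat, hcPhat] at this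
    linarith
  clear_value h
  clear_value c
  clear_value K
  clear_value w
  clear_value y
  have hle : ∀ P : ℝ, 0 < P →
      Real.log (A * B * P / ((A + B * P) * σ2)) ≤ c * P := by
    intro P hP
    rcases eq_or_ne P Phat with rfl | hne
    · rw [hlogPhat, hcPhat]
    · have hk := hkey P hP hne
      have := hLh P hP
      rw [hhPhat] at hk
      linarith
  refine ⟨hPpos, ?_, ?_⟩
  · intro P hP
    rw [hηhat P, hηhat Phat, Real.logb, Real.logb, hlogPhat]
    rw [div_div, div_div, div_le_div_iff₀ (by positivity) (by positivity)]
    have h1 := hle P hP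
    have h2 : Real.log (A * B * P / ((A + B * P) * σ2)) * Phat ≤ (1 - w) * P :=
      calc Real.log (A * B * P / ((A + B * P) * σ2)) * Phat
          ≤ c * P * Phat := mul_le_mul_of_nonneg_right h1 hPpos.le
        _ = c * Phat * P := by ring
        _ = (1 - w) * P := by rw [hcPhat]
    linarith [mul_le_mul_of_nonneg_right h2 hlog2.le]
  · intro P hP heq
    by_contra hne
    have hk := hkey P hP hne
    rw [hhPhat] at hk
    have hLP := hLh P hP
    rw [hηhat P, hηhat Phat, Real.logb, Real.logb, hlogPhat] at heq
    have hlogeq : Real.log (A * B * P / ((A + B * P) * σ2)) = c * P := by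
      rw [div_div, div_div, div_eq_div_iff (by positivity) (by positivity)] at heq
      rw [hc_def]
      rw [div_mul_eq_mul_div, eq_div_iff (ne_of_gt hPpos)]
      have h3 : Real.log (A * B * P / ((A + B * P) * σ2)) * Phat * Real.log 2
          = (1 - w) * P * Real.log 2 := by linear_combination heq
      exact mul_right_cancel₀ (ne_of_gt hlog2) h3
    linarith
end
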